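/- Let T = (V,E) be a finite tree with a distinguished root o, β ≥ 0, and B : V → ℝ with B_v ≥ 0 for all v, and let ν be the Ising measure on T with parameters β, B. For t ≥ 1 let ν_t denote ν conditioned on the event { x_v = +1 for all v ∈ V with d(o,v) ≥ t }. Then for every neighbor i of o and every t ≥ 1, ⟨x_o·x_i⟩_{ν_{t+1}} ≤ ⟨x_o·x_i⟩_{ν_t}. -/

import Mathlib

open Real Finset

attribute [local instance] Classical.propDecidable

/-- spin value of a Boolean: `true ↦ +1`, `false ↦ -1`. -/
def spin (b : Bool) : ℝ := if b then 1 else -1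

/-- the product `x_i x_j` of the spins at the two endpoints of an edge. -/
def edgeTerm {V : Type} (x : V → Bool) : Sym2 V → ℝ :=
  Sym2.lift ⟨fun i j => spin (x i) * spin (x j), fun i j => by ring⟩

variable {V : Type} [Fintype V]

/-- Ising Hamiltonian `β Σ_{(i,j)∈E} x_i x_j + Σ_i B_i x_i`. -/
noncomputable def ham (G : SimpleGraph V) (β : ℝ) (B : V → ℝ) (x : V → Bool) : ℝ :=
  β * ∑ e ∈ G.edgeFinset, edgeTerm x e + ∑ v, B v * spin (x v)

/-- expectation `⟨f⟩` under the Ising measure `ν^{β,B}_G` conditioned on the event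
`{x_v = +1 for all v with d(o,v) ≥ t}` (plus boundary condition outside the
ball of radius `t-1` around `o`). -/
noncomputable def plusCondExp (G : SimpleGraph V) (β : ℝ) (B : V → ℝ)
    (o : V) (t : ℕ) (f : (V → Bool) → ℝ) : ℝ :=
  (∑ x : V → Bool,
      if ∀ v, t ≤ G.dist o v → x v = true then f x * Real.exp (ham G β B x) else 0) /
    (∑ x : V → Bool,
      if ∀ v, t ≤ G.dist o v → x v = true then Real.exp (ham G β B x) else 0)

/-!
Write `x_A = ∏_{v ∈ A} x_v`. Conditioning on `x = +1` on `S` multiplies the Gibbs weight by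
`∏_{v ∈ S} (1 + x_v) / 2`, so `ν_t` is `ν_{t+1}` reweighted by `J = ∏_{d(o,v) = t} (1 + x_v) / 2`,
a nonnegative combination of the characters `x_A`. The claim is therefore the second Griffiths
inequality `⟨x_D x_A⟩ ≥ ⟨x_D⟩ ⟨x_A⟩` for `ν_{t+1}`, summed against the coefficients of `J`.
We prove it by Ginibre's argument: for `β, B ≥ 0` the weight `W` of `ν_{t+1}` is a product of
factors `a + b x_C` with `0 ≤ b ≤ a`, hence `W(x) W(xε)` is a nonnegative combination of
characters for every `ε`; substituting `y = xε` in
`∑_{x,y} (x_D - y_D) (x_A - y_A) W(x) W(y)` then shows that this sum is nonnegative.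
-/

open scoped symmDiff

section SpinCharacters

variable {α : Type*}

def spinChar (A : Finset α) (x : α → Bool) : ℝ := ∏ v ∈ A, spin (x v)

def spinMul (x ε : α → Bool) : α → Bool := fun v => x v == ε v

lemma spin_mul_self (b : Bool) : spin b * spin b = 1 := by
  cases b <;> norm_num [spin]

lemma spin_beq (a b : Bool) : spin (a == b) = spin a * spin b := by
  cases a <;> cases b <;> norm_num [spin]

lemma one_add_spin_div_two (b : Bool) : (1 + spin b) / 2 = if b = true then 1 else 0 := by
  cases b <;> norm_num [spin]

lemma spinChar_mul_self (A : Finset α) (x : α → Bool) : spinChar A x * spinChar A x = 1 := by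
  rw [spinChar, ← prod_mul_distrib]
  exact prod_eq_one fun v _ => spin_mul_self _

lemma spinChar_eq_one_or_eq_neg_one (A : Finset α) (x : α → Bool) :
    spinChar A x = 1 ∨ spinChar A x = -1 :=
  mul_self_eq_one_iff.mp (spinChar_mul_self A x)

lemma spinChar_le_one (A : Finset α) (x : α → Bool) : spinChar A x ≤ 1 := by
  rcases spinChar_eq_one_or_eq_neg_one A x with h | h <;> norm_num [h]

lemma spinChar_singleton (v : α) (x : α → Bool) : spinChar {v} x = spin (x v) :=
  prod_singleton _ _

lemma spinChar_mul_spinChar (A B : Finset α) (x : α → Bool) :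
    spinChar A x * spinChar B x = spinChar (A ∆ B) x := by
  have hsub : A ∩ B ⊆ A ∪ B := inter_subset_left.trans subset_union_left
  calc spinChar A x * spinChar B x
      = spinChar (A ∆ B) x * (spinChar (A ∩ B) x * spinChar (A ∩ B) x) := by
        rw [symmDiff_eq_sup_sdiff_inf, ← mul_assoc]
        simp only [spinChar, sup_eq_union, inf_eq_inter]
        rw [prod_sdiff hsub, prod_union_inter]
    _ = spinChar (A ∆ B) x := by rw [spinChar_mul_self, mul_one]

lemma one_add_spin_div_two_eq (v : α) (x : α → Bool) :
    (1 + spin (x v)) / 2 = 1 / 2 + 1 / 2 * spinChar {v} x := by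
  rw [spinChar_singleton]
  ring

lemma spin_mul_spin_eq_spinChar (u w : α) (x : α → Bool) :
    spin (x u) * spin (x w) = spinChar ({u} ∆ {w}) x := by
  rw [← spinChar_mul_spinChar, spinChar_singleton, spinChar_singleton]

lemma spinChar_spinMul (A : Finset α) (x ε : α → Bool) :
    spinChar A (spinMul x ε) = spinChar A x * spinChar A ε := by
  simp only [spinChar, spinMul, spin_beq, prod_mul_distrib]

lemma spinMul_involutive (x : α → Bool) : Function.Involutive (spinMul x) := by
  intro ε
  funext v
  change (x v == (x v == ε v)) = ε v
  cases x v <;> cases ε v <;> rfl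

lemma sum_spinChar_nonneg [Fintype α] (A : Finset α) : 0 ≤ ∑ x : α → Bool, spinChar A x := by
  have hchar : ∀ x : α → Bool, spinChar A x = ∏ v, if v ∈ A then spin (x v) else 1 :=
    fun x => (Fintype.prod_ite_mem A _).symm
  rw [sum_congr rfl fun x _ => hchar x, ← Fintype.prod_sum (fun v b => if v ∈ A then spin b else 1)]
  exact prod_nonneg fun v _ => by by_cases hv : v ∈ A <;> simp [hv, spin]

end SpinCharacters

section SpinCharCone

variable {α : Type*}

variable (α) in
def spinCharCone : PointedCone ℝ ((α → Bool) → ℝ) := PointedCone.hull ℝ (Set.range spinChar)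

lemma spinChar_mem_spinCharCone (A : Finset α) : spinChar A ∈ spinCharCone α :=
  PointedCone.subset_hull ⟨A, rfl⟩

lemma add_mul_spinChar_mem_spinCharCone {a b : ℝ} (ha : 0 ≤ a) (hb : 0 ≤ b) (C : Finset α) :
    (fun x => a + b * spinChar C x) ∈ spinCharCone α := by
  have hfun : (fun x => a + b * spinChar C x) =
      (⟨a, ha⟩ : {c : ℝ // 0 ≤ c}) • spinChar ∅ + (⟨b, hb⟩ : {c : ℝ // 0 ≤ c}) • spinChar C := by
    funext x
    simp [spinChar]
  rw [hfun]
  exact add_mem (Submodule.smul_mem _ _ (spinChar_mem_spinCharCone _))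
    (Submodule.smul_mem _ _ (spinChar_mem_spinCharCone _))

lemma one_mem_spinCharCone : (1 : (α → Bool) → ℝ) ∈ spinCharCone α := by
  convert add_mul_spinChar_mem_spinCharCone zero_le_one le_rfl (∅ : Finset α) using 1
  funext x
  simp

lemma mul_mem_spinCharCone {f g : (α → Bool) → ℝ} (hf : f ∈ spinCharCone α)
    (hg : g ∈ spinCharCone α) : f * g ∈ spinCharCone α := by
  induction hf using Submodule.span_induction with
  | mem f hf =>
    obtain ⟨A, rfl⟩ := hf
    induction hg using Submodule.span_induction with
    | mem g hg =>
      obtain ⟨B, rfl⟩ := hg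
      have hAB : spinChar A * spinChar B = spinChar (A ∆ B) :=
        funext (spinChar_mul_spinChar A B)
      rw [hAB]
      exact spinChar_mem_spinCharCone _
    | zero => simp
    | add g₁ g₂ _ _ h₁ h₂ => rw [mul_add]; exact add_mem h₁ h₂
    | smul c g _ h => rw [mul_smul_comm]; exact Submodule.smul_mem _ _ h
  | zero => simp
  | add f₁ f₂ _ _ h₁ h₂ => rw [add_mul]; exact add_mem h₁ h₂
  | smul c f _ h => rw [smul_mul_assoc]; exact Submodule.smul_mem _ _ h

lemma prod_mem_spinCharCone {ι : Type*} (s : Finset ι) (F : ι → (α → Bool) → ℝ)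
    (hF : ∀ k ∈ s, F k ∈ spinCharCone α) : ∏ k ∈ s, F k ∈ spinCharCone α :=
  prod_induction F (· ∈ spinCharCone α) (fun _ _ => mul_mem_spinCharCone)
    one_mem_spinCharCone hF

lemma sum_nonneg_of_mem_spinCharCone [Fintype α] {f : (α → Bool) → ℝ}
    (hf : f ∈ spinCharCone α) : 0 ≤ ∑ x, f x := by
  induction hf using Submodule.span_induction with
  | mem f hf =>
    obtain ⟨A, rfl⟩ := hf
    exact sum_spinChar_nonneg A
  | zero => simp
  | add f g _ _ hf hg => simpa only [Pi.add_apply, sum_add_distrib] using add_nonneg hf hg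
  | smul c f _ hf =>
    simpa only [Pi.smul_apply, ← Nonneg.coe_smul, smul_eq_mul, ← mul_sum] using mul_nonneg c.2 hf

end SpinCharCone

section Ginibre

variable {α : Type*}

def IsGinibre (W : (α → Bool) → ℝ) : Prop :=
  ∀ ε, (fun x => W x * W (spinMul x ε)) ∈ spinCharCone α

lemma IsGinibre.mul {f g : (α → Bool) → ℝ} (hf : IsGinibre f) (hg : IsGinibre g) :
    IsGinibre (f * g) := fun ε => by
  convert mul_mem_spinCharCone (hf ε) (hg ε) using 1
  funext x
  simp only [Pi.mul_apply]
  ring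

lemma isGinibre_one : IsGinibre (1 : (α → Bool) → ℝ) := fun _ => by
  convert one_mem_spinCharCone (α := α) using 1
  funext x
  simp

lemma IsGinibre.prod {ι : Type*} (s : Finset ι) (F : ι → (α → Bool) → ℝ)
    (hF : ∀ k ∈ s, IsGinibre (F k)) : IsGinibre (∏ k ∈ s, F k) :=
  prod_induction F IsGinibre (fun _ _ => IsGinibre.mul) isGinibre_one hF

lemma isGinibre_add_mul_spinChar {a b : ℝ} (hb : 0 ≤ b) (hba : b ≤ a) (C : Finset α) :
    IsGinibre (fun x => a + b * spinChar C x) := by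
  intro ε
  have hsign : 0 ≤ 1 + spinChar C ε ∧ 0 ≤ a * a + b * b * spinChar C ε := by
    rcases spinChar_eq_one_or_eq_neg_one C ε with h | h <;> rw [h] <;> constructor <;> nlinarith
  convert add_mul_spinChar_mem_spinCharCone hsign.2
    (mul_nonneg (mul_nonneg (hb.trans hba) hb) hsign.1) C using 1
  funext x
  beta_reduce
  rw [spinChar_spinMul]
  linear_combination (b * b * spinChar C ε) * spinChar_mul_self C x

lemma sum_sum_sub_mul_sub_mul {ι : Type*} [Fintype ι] (f g w : ι → ℝ) :
    ∑ x, ∑ y, (f x - f y) * (g x - g y) * (w x * w y) =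
      2 * ((∑ x, f x * g x * w x) * ∑ y, w y - (∑ x, f x * w x) * ∑ y, g y * w y) := by
  have hexpand : ∀ x y, (f x - f y) * (g x - g y) * (w x * w y) =
      f x * g x * w x * w y - f x * w x * (g y * w y) - g x * w x * (f y * w y) +
        w x * (f y * g y * w y) := fun x y => by ring
  simp only [hexpand, sum_add_distrib, sum_sub_distrib, ← mul_sum, ← sum_mul]
  ring

theorem IsGinibre.sum_mul_sum_le [Fintype α] {W : (α → Bool) → ℝ} (hW : IsGinibre W)
    (D A : Finset α) :
    (∑ x, spinChar D x * W x) * (∑ x, spinChar A x * W x) ≤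
      (∑ x, spinChar D x * spinChar A x * W x) * ∑ x, W x := by
  have hsymm : 0 ≤ ∑ x, ∑ y, (spinChar D x - spinChar D y) * (spinChar A x - spinChar A y) *
      (W x * W y) := by
    calc 0 ≤ ∑ ε, (1 - spinChar D ε) * (1 - spinChar A ε) *
          ∑ x, (spinChar (D ∆ A) * fun x => W x * W (spinMul x ε)) x := by
          refine sum_nonneg fun ε _ => mul_nonneg (mul_nonneg ?_ ?_) ?_
          · linarith [spinChar_le_one D ε]
          · linarith [spinChar_le_one A ε]
          · exact sum_nonneg_of_mem_spinCharCone
              (mul_mem_spinCharCone (spinChar_mem_spinCharCone _) (hW ε))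
      _ = ∑ ε, ∑ x, (spinChar D x - spinChar D (spinMul x ε)) *
          (spinChar A x - spinChar A (spinMul x ε)) * (W x * W (spinMul x ε)) := by
          refine sum_congr rfl fun ε _ => ?_
          rw [mul_sum]
          refine sum_congr rfl fun x _ => ?_
          rw [Pi.mul_apply, spinChar_spinMul, spinChar_spinMul, ← spinChar_mul_spinChar]
          ring
      _ = ∑ x, ∑ y, (spinChar D x - spinChar D y) * (spinChar A x - spinChar A y) *
          (W x * W y) :=
          sum_comm.trans (sum_congr rfl fun x _ => (spinMul_involutive x).bijective.sum_comp
            fun y => (spinChar D x - spinChar D y) * (spinChar A x - spinChar A y) * (W x * W y))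
  rw [sum_sum_sub_mul_sub_mul] at hsymm
  linarith

theorem IsGinibre.sum_mul_sum_le_of_mem_spinCharCone [Fintype α] {W J : (α → Bool) → ℝ}
    (hW : IsGinibre W) (hJ : J ∈ spinCharCone α) (D : Finset α) :
    (∑ x, spinChar D x * W x) * (∑ x, J x * W x) ≤
      (∑ x, spinChar D x * (J x * W x)) * ∑ x, W x := by
  induction hJ using Submodule.span_induction with
  | mem J hJ =>
    obtain ⟨A, rfl⟩ := hJ
    simpa only [mul_assoc] using hW.sum_mul_sum_le D A
  | zero => simp
  | add J K _ _ hJ hK =>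
    simp only [Pi.add_apply, add_mul, mul_add, sum_add_distrib]
    linarith
  | smul c J _ hJ =>
    simp only [Pi.smul_apply, ← Nonneg.coe_smul, smul_eq_mul, mul_assoc, mul_left_comm _ (c : ℝ),
      ← mul_sum]
    linarith [mul_le_mul_of_nonneg_left hJ c.2]

end Ginibre

section Ising

lemma exp_mul_spinChar {α : Type*} (c : ℝ) (C : Finset α) (x : α → Bool) :
    exp (c * spinChar C x) = cosh c + sinh c * spinChar C x := by
  rcases spinChar_eq_one_or_eq_neg_one C x with h | h <;> rw [h]
  · rw [mul_one, mul_one, cosh_add_sinh]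
  · rw [mul_neg_one, mul_neg_one, ← sub_eq_add_neg, cosh_sub_sinh]

lemma isGinibre_exp_mul_spinChar {α : Type*} {c : ℝ} (hc : 0 ≤ c) (C : Finset α) :
    IsGinibre (fun x => exp (c * spinChar C x)) := by
  simpa only [exp_mul_spinChar] using
    isGinibre_add_mul_spinChar (sinh_nonneg_iff.mpr hc) (sinh_lt_cosh c).le C

lemma edgeTerm_eq_spinChar {α : Type} (e : Sym2 α) :
    ∃ C : Finset α, ∀ x, edgeTerm x e = spinChar C x := by
  induction e using Sym2.ind with
  | _ u w => exact ⟨{u} ∆ {w}, fun x => spin_mul_spin_eq_spinChar u w x⟩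

lemma isGinibre_exp_ham (G : SimpleGraph V) {β : ℝ} (hβ : 0 ≤ β) {B : V → ℝ}
    (hB : ∀ v, 0 ≤ B v) : IsGinibre (fun x => exp (ham G β B x)) := by
  have hfactor : (fun x => exp (ham G β B x)) =
      (∏ e ∈ G.edgeFinset, fun x => exp (β * edgeTerm x e)) *
        ∏ v, fun x => exp (B v * spinChar {v} x) := by
    funext x
    simp only [ham, exp_add, mul_sum, exp_sum, Pi.mul_apply, prod_apply, spinChar_singleton]
  rw [hfactor]
  refine (IsGinibre.prod _ _ fun e _ => ?_).mul
    (IsGinibre.prod _ _ fun v _ => isGinibre_exp_mul_spinChar (hB v) {v})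
  obtain ⟨C, hC⟩ := edgeTerm_eq_spinChar e
  simpa only [hC] using isGinibre_exp_mul_spinChar hβ C

noncomputable def plusWeight (G : SimpleGraph V) (β : ℝ) (B : V → ℝ) (S : Finset V)
    (x : V → Bool) : ℝ :=
  (∏ v ∈ S, (1 + spin (x v)) / 2) * exp (ham G β B x)

lemma plusCondExp_eq (G : SimpleGraph V) (β : ℝ) (B : V → ℝ) (o : V) (t : ℕ)
    (f : (V → Bool) → ℝ) :
    plusCondExp G β B o t f =
      (∑ x, f x * plusWeight G β B (univ.filter (t ≤ G.dist o ·)) x) /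
        ∑ x, plusWeight G β B (univ.filter (t ≤ G.dist o ·)) x := by
  simp only [plusCondExp, plusWeight, one_add_spin_div_two, prod_boole, mem_filter, mem_univ,
    true_and, ite_mul, one_mul, zero_mul, mul_ite, mul_zero]

lemma plusWeight_nonneg (G : SimpleGraph V) (β : ℝ) (B : V → ℝ) (S : Finset V)
    (x : V → Bool) : 0 ≤ plusWeight G β B S x :=
  mul_nonneg (prod_nonneg fun v _ => by rw [one_add_spin_div_two]; split_ifs <;> norm_num)
    (exp_pos _).le

lemma sum_plusWeight_pos (G : SimpleGraph V) (β : ℝ) (B : V → ℝ) (S : Finset V) :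
    0 < ∑ x, plusWeight G β B S x :=
  sum_pos' (fun x _ => plusWeight_nonneg G β B S x)
    ⟨fun _ => true, mem_univ _, by simp [plusWeight, spin, exp_pos]⟩

lemma plusWeight_eq_prod_mul {G : SimpleGraph V} {β : ℝ} {B : V → ℝ} {S S' : Finset V}
    (h : S ⊆ S') :
    plusWeight G β B S' =
      (∏ v ∈ S' \ S, fun x => (1 + spin (x v)) / 2) * plusWeight G β B S := by
  funext x
  simp only [plusWeight, Pi.mul_apply, prod_apply, ← mul_assoc, prod_sdiff h]

lemma isGinibre_plusWeight (G : SimpleGraph V) {β : ℝ} (hβ : 0 ≤ β) {B : V → ℝ}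
    (hB : ∀ v, 0 ≤ B v) (S : Finset V) : IsGinibre (plusWeight G β B S) := by
  have hfactor : plusWeight G β B S =
      (∏ v ∈ S, fun x => 1 / 2 + 1 / 2 * spinChar {v} x) * fun x => exp (ham G β B x) := by
    funext x
    simp only [plusWeight, Pi.mul_apply, prod_apply, one_add_spin_div_two_eq]
  rw [hfactor]
  exact (IsGinibre.prod _ _ fun v _ => isGinibre_add_mul_spinChar (by norm_num) le_rfl {v}).mul
    (isGinibre_exp_ham G hβ hB)

theorem plusWeight_correlation_mono (G : SimpleGraph V) {β : ℝ} (hβ : 0 ≤ β) {B : V → ℝ}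
    (hB : ∀ v, 0 ≤ B v) {S S' : Finset V} (h : S ⊆ S') (D : Finset V) :
    (∑ x, spinChar D x * plusWeight G β B S x) / ∑ x, plusWeight G β B S x ≤
      (∑ x, spinChar D x * plusWeight G β B S' x) / ∑ x, plusWeight G β B S' x := by
  have hJ : ∏ v ∈ S' \ S, (fun x => (1 + spin (x v)) / 2) ∈ spinCharCone V := by
    refine prod_mem_spinCharCone _ _ fun v _ => ?_
    simpa only [one_add_spin_div_two_eq] using
      add_mul_spinChar_mem_spinCharCone (by norm_num) (by norm_num) {v}
  rw [div_le_div_iff₀ (sum_plusWeight_pos G β B S) (sum_plusWeight_pos G β B S'),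
    plusWeight_eq_prod_mul h]
  exact (isGinibre_plusWeight G hβ hB S).sum_mul_sum_le_of_mem_spinCharCone hJ D

end Ising

theorem plus_boundary_correlation_antitone (T : SimpleGraph V)
    (β : ℝ) (hβ : 0 ≤ β) (B : V → ℝ) (hB : ∀ v, 0 ≤ B v)
    (o i : V) (t : ℕ) :
    plusCondExp T β B o (t + 1) (fun x => spin (x o) * spin (x i)) ≤
      plusCondExp T β B o t (fun x => spin (x o) * spin (x i)) := by
  have hsub : univ.filter (t + 1 ≤ T.dist o ·) ⊆ univ.filter (t ≤ T.dist o ·) :=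
    monotone_filter_right _ fun _ _ => Nat.le_of_succ_le
  simp only [plusCondExp_eq, spin_mul_spin_eq_spinChar]
  exact plusWeight_correlation_mono T hβ hB hsub _
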